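/- The proportion of permutations of length n whose exterior is not contained in their interior tends to 0: lim_{n→∞} #{τ ∈ S_n : x(τ) ≰ i(τ)} / n! = 0, where ≤ denotes consecutive pattern containment. -/

import Mathlib

open scoped Classical

noncomputable section

/-- A permutation of length `n`, written in one-line notation as `τ 0, τ 1, …, τ (n-1)`. -/
abbrev Perm' (n : ℕ) := Equiv.Perm (Fin n)

/-- `σ` occurs in `τ` as a consecutive pattern at (0-indexed) starting position `i`:
the window `τ i, …, τ (i+m-1)` of adjacent entries is in the same relative order as `σ`. -/
def OccursAt {m n : ℕ} (σ : Perm' m) (τ : Perm' n) (i : ℕ) : Prop :=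
  ∃ h : i + m ≤ n, ∀ a b : Fin m,
    σ a < σ b ↔
      τ ⟨i + a, by have := a.isLt; omega⟩ < τ ⟨i + b, by have := b.isLt; omega⟩

/-- Consecutive pattern containment `σ ≤ τ`. -/
def PattLE {m n : ℕ} (σ : Perm' m) (τ : Perm' n) : Prop :=
  ∃ i, OccursAt σ τ i

/-- Permutations of arbitrary length: the carrier of the consecutive pattern poset. -/
abbrev PermS : Type := Σ n : ℕ, Perm' n

/-- The order of the consecutive pattern poset. -/
def pLE (p q : PermS) : Prop := PattLE p.2 q.2

/-- The strict order of the consecutive pattern poset. -/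
def pLT (p q : PermS) : Prop := pLE p q ∧ p ≠ q

/-- The covering relation of the consecutive pattern poset. -/
def pCovBy (p q : PermS) : Prop :=
  pLT p q ∧ ∀ r : PermS, pLT p r → pLT r q → False

/-- The open interval `(p,q)` in the consecutive pattern poset. -/
def openInterval (p q : PermS) : Set PermS := {r | pLT p r ∧ pLT r q}

/-- The Hasse diagram of the open interval `(p,q)`: vertices are the permutations strictly
between `p` and `q`, edges are the covering relations of the consecutive pattern poset. -/
def hasse (p q : PermS) : SimpleGraph (openInterval p q) :=
  SimpleGraph.fromRel fun a b => pCovBy a.1 b.1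

/-- The interval `[p,q]` is disconnected if the Hasse diagram of `(p,q)` is not connected. -/
def IntervalDisconnected (p q : PermS) : Prop := ¬ (hasse p q).Connected

/-- `window τ i m` is the reduction of the window of `τ` of length `m` starting at
(0-indexed) position `i`, i.e. the pattern `τ[i+1, i+m]` in 1-indexed notation. -/
def window {n : ℕ} (τ : Perm' n) (i m : ℕ) : Perm' m :=
  if h : i + m ≤ n then
    (Tuple.sort fun a : Fin m => τ ⟨i + a, by have := a.isLt; omega⟩)⁻¹
  else 1

/-- `τ` is monotone, i.e. equal to `12…n` or `n…21`. -/
def IsMonotone {n : ℕ} (τ : Perm' n) : Prop :=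
  (∀ a b : Fin n, a ≤ b → τ a ≤ τ b) ∨ (∀ a b : Fin n, a ≤ b → τ b ≤ τ a)

/-- `τ` has a bifix (a common proper prefix and proper suffix) of length `k`. -/
def HasBifixLen {n : ℕ} (τ : Perm' n) (k : ℕ) : Prop :=
  0 < k ∧ k < n ∧ window τ 0 k = window τ (n - k) k

/-- The length `|x(τ)|` of the exterior of `τ`, the longest bifix of `τ`. -/
def extLen {n : ℕ} (τ : Perm' n) : ℕ := Nat.findGreatest (HasBifixLen τ) n

/-- The exterior `x(τ)` of `τ`: its longest bifix. -/
def extPerm {n : ℕ} (τ : Perm' n) : Perm' (extLen τ) := window τ 0 (extLen τ)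

/-- The interior `i(τ) = τ[2,n-1]` of `τ`. -/
def intPerm {n : ℕ} (τ : Perm' n) : Perm' (n - 2) := window τ 1 (n - 2)

/-- `p` straddles `q`: `p < q`, `p` is both a prefix and a suffix of `q`,
and `p` has no other occurrence in `q`. -/
def Straddles (p q : PermS) : Prop :=
  pLT p q ∧ OccursAt p.2 q.2 0 ∧ OccursAt p.2 q.2 (q.1 - p.1) ∧
    ∀ i, OccursAt p.2 q.2 i → i = 0 ∨ i = q.1 - p.1

/-- The interval `[p,q]` contains a non-trivial disconnected subinterval, i.e. a
subinterval `[a,b]` of rank at least 3 which is disconnected. -/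
def HasNontrivDisconSub (p q : PermS) : Prop :=
  ∃ a b : PermS, pLE p a ∧ pLE a b ∧ pLE b q ∧ a.1 + 3 ≤ b.1 ∧ IntervalDisconnected a b

/-- The finite set of all permutations of length at most `N`. -/
def permsUpTo (N : ℕ) : Finset PermS :=
  (Finset.range (N + 1)).sigma fun n => (Finset.univ : Finset (Perm' n))

/-- The closed interval `[p,q]` of the consecutive pattern poset, as a finite set. -/
def intervalF (p q : PermS) : Finset PermS :=
  (permsUpTo q.1).filter fun r => pLE p r ∧ pLE r q

/-- The number of elements of the interval `[σ,τ]` of rank `r`, i.e. of length `|σ| + r`. -/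
def rankCard {m n : ℕ} (σ : Perm' m) (τ : Perm' n) (r : ℕ) : ℕ :=
  ((permsUpTo n).filter fun p => pLE ⟨m, σ⟩ p ∧ pLE p ⟨n, τ⟩ ∧ p.1 = m + r).card

/-- The direct sum `σ ⊕ π` of two permutations. -/
def dsum {m k : ℕ} (σ : Perm' m) (π : Perm' k) : Perm' (m + k) :=
  finSumFinEquiv.permCongr (σ.sumCongr π)


/-!
Let `k = |x(τ)|`, so that `x(τ)` is the pattern of the first `k` entries of `τ`. The windows of
length `k` starting at `k, 2k, …` lie inside the interior, so if `x(τ) ≰ i(τ)` none of them has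
the pattern `x(τ)`. Patterns of disjoint windows of a uniformly random permutation are independent
and uniform, so for `k ≤ m` this happens with probability at most `(1 - 1/k!)^((n-1)/k - 1)`.
If `k > m`, then `τ` has a bifix of length `k`, which has probability at most `1/min(k, n/4)!`:
for `2k ≤ n` prefix and suffix are disjoint windows, and for `2k > n` the bifix makes `τ`
periodic with period `n - k`, which forces two adjacent windows of length at least `n/4` to have
the same pattern. The proportion is therefore at most
`∑_{k ≤ m} (1 - 1/k!)^((n-1)/k - 1) + 2^(1-m) + n/(n/4)!`, which is small for `m`, then `n`, large.
-/

open Finset Filter Topology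
open scoped Nat

section Window

/-- The entry of `τ` at position `x`, with the junk value `n` for `x ≥ n`. -/
def entry {n : ℕ} (τ : Perm' n) (x : ℕ) : ℕ := if h : x < n then τ ⟨x, h⟩ else n

lemma entry_of_lt {n : ℕ} (τ : Perm' n) {x : ℕ} (h : x < n) : entry τ x = τ ⟨x, h⟩ := dif_pos h

lemma Tuple.sort_inv_lt_sort_inv_iff {m : ℕ} {α : Type*} [LinearOrder α] {f : Fin m → α}
    (hf : Function.Injective f) (a b : Fin m) :
    (Tuple.sort f)⁻¹ a < (Tuple.sort f)⁻¹ b ↔ f a < f b := by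
  have hmono : StrictMono (f ∘ Tuple.sort f) :=
    (Tuple.monotone_sort f).strictMono_of_injective (hf.comp (Tuple.sort f).injective)
  rw [← hmono.lt_iff_lt]
  simp [Equiv.Perm.inv_def]

lemma Equiv.Perm.eq_of_forall_lt_iff {m : ℕ} {σ σ' : Equiv.Perm (Fin m)}
    (h : ∀ a b, σ a < σ b ↔ σ' a < σ' b) : σ = σ' := by
  have hmono : Monotone (σ' * σ⁻¹) := StrictMono.monotone fun x y hxy => by
    simpa using (h (σ⁻¹ x) (σ⁻¹ y)).1 (by simpa using hxy)
  rw [Equiv.Perm.monotone_iff, mul_inv_eq_one] at hmono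
  exact hmono.symm

lemma window_lt_window_iff {n : ℕ} (τ : Perm' n) {i m : ℕ} (h : i + m ≤ n) (a b : Fin m) :
    window τ i m a < window τ i m b ↔ entry τ (i + a) < entry τ (i + b) := by
  have hinj : Function.Injective fun a : Fin m => τ ⟨i + a, by omega⟩ := fun x y hxy => by
    have := congrArg Fin.val (τ.injective hxy)
    exact Fin.ext (by simpa using this)
  rw [window, dif_pos h, Tuple.sort_inv_lt_sort_inv_iff hinj, entry_of_lt τ (by omega),
    entry_of_lt τ (by omega)]
  exact Iff.rfl

lemma window_eq_iff {n : ℕ} (τ : Perm' n) {i m : ℕ} (h : i + m ≤ n) (σ : Perm' m) :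
    window τ i m = σ ↔ ∀ a b : Fin m, σ a < σ b ↔ entry τ (i + a) < entry τ (i + b) := by
  refine ⟨?_, fun hσ => Equiv.Perm.eq_of_forall_lt_iff fun a b =>
    (window_lt_window_iff τ h a b).trans (hσ a b).symm⟩
  rintro rfl
  exact window_lt_window_iff τ h

lemma window_congr {n : ℕ} {τ τ' : Perm' n} {i m : ℕ} (h : i + m ≤ n)
    (he : ∀ a : Fin m, entry τ (i + a) = entry τ' (i + a)) : window τ i m = window τ' i m :=
  Equiv.Perm.eq_of_forall_lt_iff fun a b => by
    rw [window_lt_window_iff τ h, window_lt_window_iff τ' h, he a, he b]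

lemma pattLE_intPerm_of_window_eq {n m i : ℕ} {τ : Perm' n} {σ : Perm' m} (hi : 1 ≤ i)
    (him : i + m ≤ n - 1) (hσ : window τ i m = σ) : PattLE σ (intPerm τ) := by
  refine ⟨i - 1, by omega, fun a b => ?_⟩
  rw [(window_eq_iff τ (by omega) σ).1 hσ a b, intPerm,
    window_lt_window_iff τ (by omega) ⟨i - 1 + a, by omega⟩ ⟨i - 1 + b, by omega⟩]
  simp only [show ∀ x : ℕ, 1 + (i - 1 + x) = i + x by omega]

end Window

section Twist

def windowEquiv {n : ℕ} (q l : ℕ) (h : q + l ≤ n) :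
    Fin l ≃ {x : Fin n // q ≤ x.val ∧ x.val < q + l} where
  toFun a := ⟨⟨q + a, by omega⟩, by simp⟩
  invFun x := ⟨x.1.1 - q, by omega⟩
  left_inv a := by ext; simp
  right_inv x := by ext; simp; omega

def twist {n : ℕ} (q l : ℕ) (h : q + l ≤ n) (g : Perm' l) : Perm' n :=
  g.extendDomain (windowEquiv q l h)

variable {n q l : ℕ} (h : q + l ≤ n)

lemma twist_mul (g g' : Perm' l) : twist q l h g * twist q l h g' = twist q l h (g * g') :=
  Equiv.Perm.extendDomain_mul _ g g'

lemma twist_one : twist q l h 1 = 1 := Equiv.Perm.extendDomain_one _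

lemma entry_mul_twist_of_mem (g : Perm' l) (τ : Perm' n) (a : Fin l) :
    entry (τ * twist q l h g) (q + a) = entry τ (q + g a) := by
  rw [entry_of_lt _ (by omega), entry_of_lt _ (by omega), Equiv.Perm.mul_apply]
  congr 2
  exact Equiv.Perm.extendDomain_apply_image g (windowEquiv q l h) a

lemma entry_mul_twist_of_not_mem (g : Perm' l) (τ : Perm' n) {x : ℕ} (hx : x < q ∨ q + l ≤ x) :
    entry (τ * twist q l h g) x = entry τ x := by
  by_cases hxn : x < n
  · rw [entry_of_lt _ hxn, entry_of_lt _ hxn, Equiv.Perm.mul_apply, twist,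
      Equiv.Perm.extendDomain_apply_not_subtype _ _ (by simp only; omega)]
  · simp [entry, hxn]

lemma window_mul_twist (g : Perm' l) (τ : Perm' n) :
    window (τ * twist q l h g) q l = window τ q l * g :=
  Equiv.Perm.eq_of_forall_lt_iff fun a b => by
    rw [window_lt_window_iff _ h, Equiv.Perm.mul_apply, Equiv.Perm.mul_apply,
      window_lt_window_iff τ h, entry_mul_twist_of_mem h, entry_mul_twist_of_mem h]

lemma window_mul_twist_of_disjoint (g : Perm' l) (τ : Perm' n) {q' l' : ℕ} (h' : q' + l' ≤ n)
    (hd : q' + l' ≤ q ∨ q + l ≤ q') : window (τ * twist q l h g) q' l' = window τ q' l' :=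
  window_congr h' fun a => entry_mul_twist_of_not_mem h g τ (by omega)

end Twist

section Counting

variable {n l : ℕ}

lemma card_filter_and_window_eq_eq {q : ℕ} (h : q + l ≤ n) (C : Perm' n → Prop)
    [DecidablePred C] (hC : ∀ τ g, C τ → C (τ * twist q l h g)) (g g' : Perm' l) :
    #{τ | C τ ∧ window τ q l = g} = #{τ | C τ ∧ window τ q l = g'} := by
  have maps_to : ∀ g g' : Perm' l, ∀ τ ∈ ({τ | C τ ∧ window τ q l = g} : Finset (Perm' n)),
      τ * twist q l h (g⁻¹ * g') ∈ ({τ | C τ ∧ window τ q l = g'} : Finset (Perm' n)) := by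
    intro g g' τ hτ
    simp only [mem_filter, mem_univ, true_and] at hτ ⊢
    exact ⟨hC τ _ hτ.1, by rw [window_mul_twist, hτ.2, mul_inv_cancel_left]⟩
  have inv : ∀ (g g' : Perm' l) (τ : Perm' n),
      τ * twist q l h (g⁻¹ * g') * twist q l h (g'⁻¹ * g) = τ := by
    intro g g' τ
    rw [mul_assoc, twist_mul, show g⁻¹ * g' * (g'⁻¹ * g) = 1 by group, twist_one, mul_one]
  exact card_bij' (fun τ _ => τ * twist q l h (g⁻¹ * g')) (fun τ _ => τ * twist q l h (g'⁻¹ * g))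
    (maps_to g g') (maps_to g' g) (fun τ _ => inv g g' τ) (fun τ _ => inv g' g τ)

lemma card_filter_eq_factorial_mul {q : ℕ} (h : q + l ≤ n) (C : Perm' n → Prop)
    [DecidablePred C] (hC : ∀ τ g, C τ → C (τ * twist q l h g)) (g : Perm' l) :
    #{τ | C τ} = l ! * #{τ | C τ ∧ window τ q l = g} := by
  rw [card_eq_sum_card_fiberwise (f := fun τ => window τ q l) (t := univ) fun _ _ => mem_univ _]
  simp_rw [filter_filter, card_filter_and_window_eq_eq h C hC _ g]
  rw [sum_const, card_univ, Fintype.card_perm, Fintype.card_fin, smul_eq_mul]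

/-- The patterns of pairwise disjoint windows of a uniform random permutation are independent
and uniform. -/
lemma card_filter_forall_window_eq_mul (r : ℕ) (p : Fin r → ℕ) (hp : ∀ s, p s + l ≤ n)
    (hd : ∀ s s', s ≠ s' → p s + l ≤ p s' ∨ p s' + l ≤ p s) (σ : Fin r → Perm' l) :
    #{τ : Perm' n | ∀ s, window τ (p s) l = σ s} * l ! ^ r = n ! := by
  induction r with
  | zero => simp [Fintype.card_perm]
  | succ r ih =>
    set C : Perm' n → Prop := fun τ => ∀ s : Fin r, window τ (p s.succ) l = σ s.succ
    have hC : ∀ τ g, C τ → C (τ * twist (p 0) l (hp 0) g) := fun τ g hτ s => by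
      rw [window_mul_twist_of_disjoint _ _ _ (hp s.succ)
        (hd s.succ 0 (Fin.succ_ne_zero s)), hτ s]
    have hsplit : #{τ : Perm' n | ∀ s, window τ (p s) l = σ s}
        = #{τ | C τ ∧ window τ (p 0) l = σ 0} := by
      congr 1
      exact filter_congr fun τ _ => ⟨fun hτ => ⟨fun s => hτ s.succ, hτ 0⟩,
        fun hτ s => Fin.cases hτ.2 hτ.1 s⟩
    calc _ = l ! * #{τ | C τ ∧ window τ (p 0) l = σ 0} * l ! ^ r := by rw [hsplit]; ring
      _ = #{τ | C τ} * l ! ^ r := by rw [card_filter_eq_factorial_mul (hp 0) C hC (σ 0)]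
      _ = n ! := ih (fun s => p s.succ) (fun s => hp s.succ)
        (fun s s' hss => hd _ _ (Fin.succ_injective _ |>.ne hss)) _

lemma card_filter_windows_mul (r : ℕ) (p : Fin r → ℕ) (hp : ∀ s, p s + l ≤ n)
    (hd : ∀ s s', s ≠ s' → p s + l ≤ p s' ∨ p s' + l ≤ p s) (P : (Fin r → Perm' l) → Prop)
    [DecidablePred P] :
    #{τ : Perm' n | P fun s => window τ (p s) l} * l ! ^ r = n ! * #{v | P v} := by
  rw [card_eq_sum_card_fiberwise (f := fun τ s => window τ (p s) l) (t := {v | P v})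
    fun τ hτ => by simpa using hτ, sum_mul]
  have hfiber : ∀ v ∈ ({v | P v} : Finset (Fin r → Perm' l)),
      #{τ ∈ ({τ | P fun s => window τ (p s) l} : Finset (Perm' n)) |
        (fun s => window τ (p s) l) = v} = #{τ : Perm' n | ∀ s, window τ (p s) l = v s} := by
    intro v hv
    congr 1
    ext τ
    simp only [mem_filter, mem_univ, true_and, funext_iff] at hv ⊢
    exact ⟨And.right, fun hτ => ⟨by rwa [funext hτ], hτ⟩⟩
  rw [sum_congr rfl fun v hv => by rw [hfiber v hv],
    sum_congr rfl fun v _ => card_filter_forall_window_eq_mul r p hp hd v, sum_const,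
    smul_eq_mul, mul_comm]

end Counting

section WindowEvents

variable {n : ℕ}

lemma card_filter_window_eq_window_mul {L q : ℕ} (hq : L ≤ q) (hqn : q + L ≤ n) :
    #{τ : Perm' n | window τ 0 L = window τ q L} * L ! = n ! := by
  have hdiag : #{v : Fin 2 → Perm' L | v 0 = v 1} = L ! := by
    have : ({v | v 0 = v 1} : Finset (Fin 2 → Perm' L))
        = univ.map ⟨Function.const (Fin 2), Function.const_injective⟩ := by
      ext v
      simp only [mem_filter, mem_univ, true_and, Finset.mem_map]
      refine ⟨fun hv => ⟨v 0, funext fun i => ?_⟩, ?_⟩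
      · fin_cases i
        exacts [rfl, hv]
      · rintro ⟨b, rfl⟩
        rfl
    rw [this, card_map, card_univ, Fintype.card_perm, Fintype.card_fin]
  have h := card_filter_windows_mul (n := n) (l := L) 2 ![0, q]
    (by simp [Fin.forall_fin_two]; omega) (by simp [Fin.forall_fin_two]; omega) fun v => v 0 = v 1
  simp only [Matrix.cons_val_zero, Matrix.cons_val_one] at h
  rw [hdiag] at h
  exact Nat.eq_of_mul_eq_mul_right (Nat.factorial_pos L) (by rw [mul_assoc, ← sq]; exact h)

lemma card_filter_forall_ne_zero_ne_le {β : Type*} [Fintype β] [DecidableEq β] (t : ℕ) :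
    #{v : Fin (t + 1) → β | ∀ s, s ≠ 0 → v s ≠ v 0}
      ≤ Fintype.card β * (Fintype.card β - 1) ^ t := by
  have hsub : ({v | ∀ s, s ≠ 0 → v s ≠ v 0} : Finset (Fin (t + 1) → β))
      ⊆ univ.biUnion fun b => Fintype.piFinset fun s => if s = 0 then {b} else univ.erase b := by
    intro v hv
    rw [mem_filter] at hv
    refine mem_biUnion.2 ⟨v 0, mem_univ _, Fintype.mem_piFinset.2 fun s => ?_⟩
    by_cases hs : s = 0
    · simp [hs]
    · simpa [hs] using hv.2 s hs
  refine (card_le_card hsub).trans (card_biUnion_le.trans ?_)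
  have hcard : ∀ b : β, #(Fintype.piFinset fun s : Fin (t + 1) =>
      if s = 0 then {b} else univ.erase b) = (Fintype.card β - 1) ^ t := fun b => by
    simp [Fintype.card_piFinset, Fin.prod_univ_succ, Fin.succ_ne_zero, card_erase_of_mem]
  simp [hcard]

def avoidingPerms (n k t : ℕ) : Finset (Perm' n) :=
  {τ | ∀ s : Fin (t + 1), s ≠ 0 → window τ (s * k) k ≠ window τ 0 k}

lemma card_avoidingPerms_mul_le {k t : ℕ} (htn : (t + 1) * k ≤ n) :
    #(avoidingPerms n k t) * k ! ^ (t + 1) ≤ n ! * (k ! * ((k !) - 1) ^ t) := by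
  have hp : ∀ s : Fin (t + 1), s * k + k ≤ n := fun s => by
    nlinarith [s.isLt]
  have hd : ∀ s s' : Fin (t + 1), s ≠ s' → s * k + k ≤ s' * k ∨ s' * k + k ≤ s * k := by
    intro s s' hss
    rcases lt_or_gt_of_ne (Fin.val_ne_of_ne hss) with hlt | hlt
    · exact Or.inl (by nlinarith)
    · exact Or.inr (by nlinarith)
  have h := card_filter_windows_mul (t + 1) (fun s => s * k) hp hd fun v => ∀ s, s ≠ 0 → v s ≠ v 0
  simp only [Fin.val_zero, zero_mul] at h
  rw [avoidingPerms, h]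
  refine Nat.mul_le_mul_left _ ?_
  simpa [Fintype.card_perm] using card_filter_forall_ne_zero_ne_le (β := Perm' k) t

lemma card_avoidingPerms_div_le {k t : ℕ} (htn : (t + 1) * k ≤ n) :
    (#(avoidingPerms n k t) : ℝ) / n ! ≤ (1 - 1 / k ! : ℝ) ^ t := by
  have hk : (1 : ℝ) ≤ k ! := by exact_mod_cast Nat.one_le_iff_ne_zero.2 (Nat.factorial_ne_zero k)
  have hcast : (#(avoidingPerms n k t) : ℝ) * (k ! : ℝ) ^ (t + 1)
      ≤ n ! * (k ! * ((k ! : ℝ) - 1) ^ t) := by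
    have := card_avoidingPerms_mul_le htn
    rw [← Nat.cast_le (α := ℝ)] at this
    push_cast [Nat.cast_sub (Nat.one_le_iff_ne_zero.2 (Nat.factorial_ne_zero k))] at this
    exact this
  rw [div_le_iff₀ (by positivity), one_sub_div (by positivity), div_pow]
  rw [← le_div_iff₀ (by positivity)] at hcast
  calc _ ≤ (n ! : ℝ) * (k ! * ((k ! : ℝ) - 1) ^ t) / (k ! : ℝ) ^ (t + 1) := hcast
    _ = _ := by field_simp; ring

end WindowEvents

section Bifix

variable {n : ℕ}

lemma entry_lt_entry_iff_of_window_eq_window {τ : Perm' n} {d j : ℕ} (hdj : d + j ≤ n)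
    (hw : window τ 0 j = window τ d j) {x y : ℕ} (hx : x < j) (hy : y < j) :
    entry τ x < entry τ y ↔ entry τ (d + x) < entry τ (d + y) := by
  have h0 := window_lt_window_iff τ (i := 0) (by omega) ⟨x, hx⟩ ⟨y, hy⟩
  rw [hw, window_lt_window_iff τ hdj] at h0
  simpa using h0.symm

/-- A bifix of length `j = n - d` makes the pattern of `τ` periodic with period `d`. -/
lemma window_eq_window_of_window_eq_window {τ : Perm' n} {d j : ℕ} (hdj : d + j = n)
    (hw : window τ 0 j = window τ d j) {s : ℕ} (hs : 2 * (s * d) ≤ n) :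
    window τ 0 (s * d) = window τ (s * d) (s * d) := by
  have hshift : ∀ r ≤ s, ∀ x y, x < s * d → y < s * d →
      (entry τ x < entry τ y ↔ entry τ (r * d + x) < entry τ (r * d + y)) := by
    intro r
    induction r with
    | zero => simp
    | succ r ih =>
      intro hrs x y hx hy
      have hrd : r * d + s * d + d ≤ n := by nlinarith
      rw [ih (by omega) x y hx hy, entry_lt_entry_iff_of_window_eq_window (by omega) hw
        (by nlinarith) (by nlinarith)]
      simp only [add_mul, one_mul, add_comm d, add_assoc]
  refine Equiv.Perm.eq_of_forall_lt_iff fun a b => ?_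
  rw [window_lt_window_iff τ (by omega), window_lt_window_iff τ (by omega), zero_add, zero_add]
  exact hshift s le_rfl a b a.isLt b.isLt

lemma exists_window_eq_window_of_hasBifixLen {j : ℕ} (hj : j < n) :
    ∃ L q, min j (n / 4) ≤ L ∧ L ≤ q ∧ q + L ≤ n ∧
      ∀ τ : Perm' n, HasBifixLen τ j → window τ 0 L = window τ q L := by
  by_cases h2j : 2 * j ≤ n
  · exact ⟨j, n - j, min_le_left _ _, by omega, by omega, fun τ hτ => hτ.2.2⟩
  -- for a long bifix, use the period `d = n - j` repeated `s = n / (2d)` times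
  obtain ⟨d, s, hd, hs⟩ : ∃ d s, d = n - j ∧ s = n / (2 * d) := ⟨_, _, rfl, rfl⟩
  have hs1 : 1 ≤ s := hs ▸ Nat.one_le_div_iff (by omega) |>.2 (by omega)
  have hdiv : 2 * (s * d) + n % (2 * d) = n := by
    have h := Nat.div_add_mod n (2 * d)
    rw [← hs] at h
    linarith [show 2 * (s * d) = 2 * d * s by ring]
  have hmod := Nat.mod_lt n (show 0 < 2 * d by omega)
  have hdL : d ≤ s * d := Nat.le_mul_of_pos_left d hs1
  refine ⟨s * d, s * d, (min_le_right _ _).trans (by omega), le_rfl, by omega, fun τ hτ => ?_⟩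
  exact window_eq_window_of_window_eq_window (by omega) (hd ▸ hτ.2.2) (by omega)

lemma card_filter_hasBifixLen_mul_le {j : ℕ} (hj : j < n) :
    #{τ : Perm' n | HasBifixLen τ j} * (min j (n / 4))! ≤ n ! := by
  obtain ⟨L, q, hjL, hLq, hqn, hbifix⟩ := exists_window_eq_window_of_hasBifixLen hj
  calc #{τ : Perm' n | HasBifixLen τ j} * (min j (n / 4))!
      ≤ #{τ : Perm' n | window τ 0 L = window τ q L} * L ! :=
        Nat.mul_le_mul (card_le_card fun τ hτ => by simp_all) (Nat.factorial_le hjL)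
    _ = n ! := card_filter_window_eq_window_mul hLq hqn

lemma card_filter_hasBifixLen_div_le {j : ℕ} (hj0 : 0 < j) (hj : j < n) :
    (#{τ : Perm' n | HasBifixLen τ j} : ℝ) / n ! ≤ (1 / 2 : ℝ) ^ (j - 1) + 1 / (n / 4)! := by
  have hmin : (#{τ : Perm' n | HasBifixLen τ j} : ℝ) / n ! ≤ 1 / (min j (n / 4))! := by
    rw [div_le_div_iff₀ (by positivity) (by positivity), one_mul]
    exact_mod_cast card_filter_hasBifixLen_mul_le hj
  have hfac : 1 / (j ! : ℝ) ≤ (1 / 2) ^ (j - 1) := by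
    rw [one_div_pow, one_div_le_one_div (by positivity) (by positivity)]
    have := Nat.factorial_mul_pow_le_factorial (m := 1) (n := j - 1)
    rw [show 1 + (j - 1) = j by omega] at this
    exact_mod_cast (by simpa using this : 2 ^ (j - 1) ≤ j !)
  refine hmin.trans ?_
  rcases min_choice j (n / 4) with h | h <;> rw [h]
  · linarith [show (0 : ℝ) ≤ 1 / (n / 4)! by positivity]
  · linarith [show (0 : ℝ) ≤ (1 / 2) ^ (j - 1) by positivity]

end Bifix

section Exterior

variable {n : ℕ}

lemma hasBifixLen_extLen (τ : Perm' n) (hn : 2 ≤ n) : HasBifixLen τ (extLen τ) :=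
  Nat.findGreatest_spec (m := 1) (by omega) ⟨one_pos, hn, Subsingleton.elim _ _⟩

lemma mem_avoidingPerms_of_not_pattLE (hn : 2 ≤ n) {τ : Perm' n}
    (hτ : ¬ PattLE (extPerm τ) (intPerm τ)) :
    τ ∈ avoidingPerms n (extLen τ) ((n - 1) / extLen τ - 1) := by
  obtain ⟨hk, hkn, -⟩ := hasBifixLen_extLen τ hn
  set k := extLen τ
  have hq : 1 ≤ (n - 1) / k := Nat.one_le_div_iff hk |>.2 (by omega)
  have hqk := Nat.div_mul_le_self (n - 1) k
  rw [avoidingPerms, mem_filter]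
  refine ⟨mem_univ _, fun s hs heq => ?_⟩
  have hs1 : 1 ≤ (s : ℕ) := Nat.one_le_iff_ne_zero.2 (Fin.val_ne_zero_iff.2 hs)
  have hsk : (s + 1) * k ≤ (n - 1) / k * k := Nat.mul_le_mul_right k (by omega)
  exact hτ (pattLE_intPerm_of_window_eq (Nat.one_le_iff_ne_zero.2 (by positivity))
    (by linarith [add_mul (s : ℕ) 1 k]) heq)

lemma filter_not_pattLE_subset (hn : 2 ≤ n) (m : ℕ) :
    ({τ | ¬ PattLE (extPerm τ) (intPerm τ)} : Finset (Perm' n)) ⊆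
      (Icc 1 m).biUnion (fun k => avoidingPerms n k ((n - 1) / k - 1)) ∪
        (Ico (m + 1) n).biUnion fun k => {τ : Perm' n | HasBifixLen τ k} := by
  intro τ hτ
  simp only [mem_filter, mem_univ, true_and] at hτ
  obtain ⟨hk, hkn, -⟩ := hasBifixLen_extLen τ hn
  rcases le_or_gt (extLen τ) m with hkm | hkm
  · exact mem_union_left _ <| mem_biUnion.2
      ⟨extLen τ, mem_Icc.2 ⟨hk, hkm⟩, mem_avoidingPerms_of_not_pattLE hn hτ⟩
  · exact mem_union_right _ <| mem_biUnion.2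
      ⟨extLen τ, mem_Ico.2 ⟨hkm, hkn⟩, by simpa using hasBifixLen_extLen τ hn⟩

end Exterior

section Asymptotics

lemma sum_Ico_half_pow_sub_one_le (m n : ℕ) :
    ∑ k ∈ Ico (m + 1) n, (1 / 2 : ℝ) ^ (k - 1) ≤ 2 * (1 / 2) ^ m := by
  calc ∑ k ∈ Ico (m + 1) n, (1 / 2 : ℝ) ^ (k - 1) = ∑ k ∈ Ico (m + 1) n, 2 * (1 / 2 : ℝ) ^ k :=
        sum_congr rfl fun k hk => by
          rw [← Nat.sub_add_cancel (show 1 ≤ k by simp at hk; omega), pow_succ, Nat.add_sub_cancel]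
          ring
    _ ≤ 2 * ((1 / 2) ^ (m + 1) / (1 - 1 / 2)) := by
        rw [← mul_sum]
        gcongr
        exact geom_sum_Ico_le_of_lt_one (by norm_num) (by norm_num)
    _ = 2 * (1 / 2) ^ m := by ring

lemma card_filter_not_pattLE_div_le {n m : ℕ} (hn : 2 ≤ n) (hmn : m < n) :
    (#{τ : Perm' n | ¬ PattLE (extPerm τ) (intPerm τ)} : ℝ) / n ! ≤
      2 * (1 / 2) ^ m + (∑ k ∈ Icc 1 m, (1 - 1 / k ! : ℝ) ^ ((n - 1) / k - 1) + n / (n / 4)!) := by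
  have hcard := (card_le_card (filter_not_pattLE_subset hn m)).trans <|
    (card_union_le _ _).trans (add_le_add card_biUnion_le card_biUnion_le)
  have hsmall : ∀ k ∈ Icc 1 m, (#(avoidingPerms n k ((n - 1) / k - 1)) : ℝ) / n ! ≤
      (1 - 1 / k ! : ℝ) ^ ((n - 1) / k - 1) := fun k hk => by
    obtain ⟨hk1, hkm⟩ := mem_Icc.1 hk
    have hq : 1 ≤ (n - 1) / k := Nat.one_le_div_iff (by omega) |>.2 (by omega)
    refine card_avoidingPerms_div_le ?_
    rw [Nat.sub_add_cancel hq]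
    exact (Nat.div_mul_le_self _ _).trans (Nat.sub_le n 1)
  have hlarge : ∀ k ∈ Ico (m + 1) n, (#{τ : Perm' n | HasBifixLen τ k} : ℝ) / n ! ≤
      (1 / 2) ^ (k - 1) + 1 / (n / 4)! := fun k hk =>
    card_filter_hasBifixLen_div_le (by simp at hk; omega) (mem_Ico.1 hk).2
  have hcount : ((n - (m + 1) : ℕ) : ℝ) * (1 / (n / 4)!) ≤ n / (n / 4)! := by
    rw [mul_one_div]
    gcongr
    exact_mod_cast Nat.sub_le n (m + 1)
  calc _ ≤ ∑ k ∈ Icc 1 m, (#(avoidingPerms n k ((n - 1) / k - 1)) : ℝ) / n ! +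
        ∑ k ∈ Ico (m + 1) n, (#{τ : Perm' n | HasBifixLen τ k} : ℝ) / n ! := by
        rw [← sum_div, ← sum_div, ← add_div]
        gcongr
        exact_mod_cast hcard
    _ ≤ ∑ k ∈ Icc 1 m, (1 - 1 / k ! : ℝ) ^ ((n - 1) / k - 1) +
        ∑ k ∈ Ico (m + 1) n, ((1 / 2 : ℝ) ^ (k - 1) + 1 / (n / 4)!) :=
        add_le_add (sum_le_sum hsmall) (sum_le_sum hlarge)
    _ ≤ _ := by
        rw [sum_add_distrib, sum_const, nsmul_eq_mul, Nat.card_Ico]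
        linarith [sum_Ico_half_pow_sub_one_le m n]

lemma tendsto_one_sub_inv_factorial_pow {k : ℕ} (hk : k ≠ 0) :
    Tendsto (fun n => (1 - 1 / k ! : ℝ) ^ ((n - 1) / k - 1)) atTop (𝓝 0) := by
  have hk1 : (1 : ℝ) ≤ k ! := by exact_mod_cast Nat.one_le_iff_ne_zero.2 (Nat.factorial_ne_zero k)
  refine (tendsto_pow_atTop_nhds_zero_of_lt_one ?_ ?_).comp <| (tendsto_sub_atTop_nat 1).comp <|
    (Nat.tendsto_div_const_atTop hk).comp (tendsto_sub_atTop_nat 1)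
  · rw [sub_nonneg, div_le_one (by positivity)]
    exact hk1
  · have : (0 : ℝ) < 1 / k ! := by positivity
    linarith

lemma sq_le_factorial_div_four {n : ℕ} (hn : 256 ≤ n) : n ^ 2 ≤ (n / 4)! := by
  obtain ⟨b, hb⟩ : ∃ b, n / 4 = b + 4 := ⟨n / 4 - 4, by omega⟩
  have hnb : n ≤ (b + 1) ^ 2 := by
    have : n < 4 * (b + 5) := by omega
    nlinarith
  calc n ^ 2 ≤ (b + 4) * (b + 3) * (b + 2) * (b + 1) * 1 := by nlinarith
    _ ≤ (b + 4) * (b + 3) * (b + 2) * (b + 1) * b ! := by gcongr; exact Nat.factorial_pos b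
    _ = (n / 4)! := by rw [hb]; simp [Nat.factorial_succ]; ring

lemma tendsto_div_factorial_div_four :
    Tendsto (fun n : ℕ => (n : ℝ) / (n / 4)!) atTop (𝓝 0) := by
  refine tendsto_of_tendsto_of_tendsto_of_le_of_le' tendsto_const_nhds
    tendsto_one_div_atTop_nhds_zero_nat (Eventually.of_forall fun n => by positivity) ?_
  filter_upwards [eventually_ge_atTop 256] with n hn
  rw [div_le_div_iff₀ (by positivity) (by positivity), one_mul, ← sq]
  exact_mod_cast sq_le_factorial_div_four hn

lemma tendsto_nhds_zero_of_le_add {α : Type*} {l : Filter α} {f : α → ℝ} {a : ℕ → ℝ}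
    {b : ℕ → α → ℝ} (hf : ∀ x, 0 ≤ f x) (ha : Tendsto a atTop (𝓝 0))
    (hb : ∀ m, Tendsto (b m) l (𝓝 0)) (hle : ∀ m, ∀ᶠ x in l, f x ≤ a m + b m x) :
    Tendsto f l (𝓝 0) := by
  refine tendsto_order.2 ⟨fun ε hε => Eventually.of_forall fun x => hε.trans_le (hf x),
    fun ε hε => ?_⟩
  obtain ⟨m, hm⟩ := (ha.eventually_lt_const (half_pos hε)).exists
  filter_upwards [hle m, (hb m).eventually_lt_const (half_pos hε)] with x hx hbx
  linarith

end Asymptotics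

/-- Theorem 6.7: the proportion of permutations of length `n` whose
exterior is not contained (as a consecutive pattern) in their interior tends to 0. -/
theorem stmt15 :
    Filter.Tendsto
      (fun n : ℕ =>
        ((Finset.univ.filter fun τ : Perm' n =>
            ¬ PattLE (extPerm τ) (intPerm τ)).card : ℝ) / (Nat.factorial n : ℝ))
      Filter.atTop (nhds 0) := by
  refine tendsto_nhds_zero_of_le_add (fun n => by positivity) (a := fun m => 2 * (1 / 2 : ℝ) ^ m)
    (b := fun m n => ∑ k ∈ Icc 1 m, (1 - 1 / k ! : ℝ) ^ ((n - 1) / k - 1) + n / (n / 4)!)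
    ?_ (fun m => ?_) fun m => ?_
  · simpa using (tendsto_pow_atTop_nhds_zero_of_lt_one (r := (1 / 2 : ℝ)) (by norm_num)
      (by norm_num)).const_mul 2
  · simpa using (tendsto_finsetSum (Icc 1 m) fun k hk =>
      tendsto_one_sub_inv_factorial_pow (by simp at hk; omega)).add tendsto_div_factorial_div_four
  · filter_upwards [eventually_ge_atTop (m + 2)] with n hn
    exact card_filter_not_pattLE_div_le (by omega) (by omega)

end
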